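/- Pareto-dominated winners are impossible for lazy voters under lexicographic tie-breaking: if b is a PNE of the lazy-voter game with lexicographic tie-breaking and candidate c wins, then c is ranked first by at least one voter; consequently c is not Pareto-dominated (there is no candidate c' whom every voter prefers to c). -/
import Mathlib


open Finset

/-- A ballot vector: each voter either abstains (`none`) or votes for a candidate. -/
abbrev Ballot (n m : ℕ) := Fin n → Option (Fin m)

/-- The plurality score of candidate `c` under ballot vector `b`. -/
def sc {n m : ℕ} (b : Ballot n m) (c : Fin m) : ℕ :=
  (univ.filter fun i => b i = some c).card

/-- The maximum plurality score. -/
def maxScore {n m : ℕ} (b : Ballot n m) : ℕ :=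
  univ.sup fun c : Fin m => sc b c

/-- The winning set `W(b)`: candidates with maximum score. -/
def winSet {n m : ℕ} (b : Ballot n m) : Finset (Fin m) :=
  univ.filter fun c => sc b c = maxScore b

/-- `H(b)`: candidates whose score is the maximum minus one. -/
def Hset {n m : ℕ} (b : Ballot n m) : Finset (Fin m) :=
  univ.filter fun c => sc b c + 1 = maxScore b

/-- `H'(b)`: candidates whose score is the maximum minus two. -/
def H'set {n m : ℕ} (b : Ballot n m) : Finset (Fin m) :=
  univ.filter fun c => sc b c + 2 = maxScore b

/-- `c` is the winner under lexicographic tie-breaking: the minimum-index member of `W(b)`. -/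
def IsLexWin {n m : ℕ} (b : Ballot n m) (c : Fin m) : Prop :=
  c ∈ winSet b ∧ ∀ c' ∈ winSet b, (c : ℕ) ≤ (c' : ℕ)

/-- The (degenerate) lottery induced by lexicographic tie-breaking. -/
def pLex {n m : ℕ} (b : Ballot n m) : Fin m → ℚ := fun c =>
  if c ∈ winSet b ∧ ∀ c' ∈ winSet b, (c : ℕ) ≤ (c' : ℕ) then 1 else 0

/-- The lottery induced by random-candidate tie-breaking: uniform over `W(b)`. -/
def pRC {n m : ℕ} (b : Ballot n m) : Fin m → ℚ := fun c =>
  if c ∈ winSet b then ((winSet b).card : ℚ)⁻¹ else 0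

/-- The lottery induced by random-voter tie-breaking: a uniformly random voter's
favourite member of `W(b)` is elected. -/
def pRV {n m : ℕ} (u : Fin n → Fin m → ℕ) (b : Ballot n m) : Fin m → ℚ := fun c =>
  ((univ.filter fun i : Fin n =>
      c ∈ winSet b ∧ ∀ c' ∈ winSet b, u i c' ≤ u i c).card : ℚ) / (n : ℚ)

/-- Expected utility of a lottery `p` for a voter with utility function `ui`. -/
def EU {m : ℕ} (ui : Fin m → ℕ) (p : Fin m → ℚ) : ℚ := ∑ c, p c * (ui c : ℚ)

/-- Payoff of lazy voter `i`: expected utility plus a bonus `ε` for abstaining. -/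
def lazyU {n m : ℕ} (p : Ballot n m → Fin m → ℚ) (u : Fin n → Fin m → ℕ)
    (ε : ℚ) (i : Fin n) (b : Ballot n m) : ℚ :=
  EU (u i) (p b) + if b i = none then ε else 0

/-- Pure Nash equilibrium of the lazy-voter game. -/
def lazyPNE {n m : ℕ} (p : Ballot n m → Fin m → ℚ) (u : Fin n → Fin m → ℕ)
    (ε : ℚ) (b : Ballot n m) : Prop :=
  ∀ (i : Fin n) (b' : Option (Fin m)),
    lazyU p u ε i (Function.update b i b') ≤ lazyU p u ε i b

/-- View a non-abstaining (truth-biased) ballot vector as a general ballot vector. -/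
def tv {n m : ℕ} (b : Fin n → Fin m) : Ballot n m := fun i => some (b i)

/-- Payoff of truth-biased voter `i`: expected utility plus a bonus `ε` for voting
truthfully (abstention, which would yield `-∞`, is never used). -/
def tbU {n m : ℕ} (p : Ballot n m → Fin m → ℚ) (u : Fin n → Fin m → ℕ)
    (a : Fin n → Fin m) (ε : ℚ) (i : Fin n) (b : Fin n → Fin m) : ℚ :=
  EU (u i) (p (tv b)) + if b i = a i then ε else 0

/-- Pure Nash equilibrium of the truth-biased game. -/
def tbPNE {n m : ℕ} (p : Ballot n m → Fin m → ℚ) (u : Fin n → Fin m → ℕ)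
    (a : Fin n → Fin m) (ε : ℚ) (b : Fin n → Fin m) : Prop :=
  ∀ (i : Fin n) (b' : Fin m),
    tbU p u a ε i (Function.update b i b') ≤ tbU p u a ε i b

section Helpers

lemma sc_le_max {n m : ℕ} (b : Ballot n m) (c : Fin m) : sc b c ≤ maxScore b :=
  Finset.le_sup (Finset.mem_univ c)

lemma max_le' {n m : ℕ} (b : Ballot n m) (K : ℕ) (h : ∀ d, sc b d ≤ K) : maxScore b ≤ K :=
  Finset.sup_le fun d _ => h d

lemma sc_update {n m : ℕ} (b : Ballot n m) (i : Fin n) (v : Option (Fin m)) (d : Fin m) :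
    sc (Function.update b i v) d + (if b i = some d then 1 else 0)
      = sc b d + (if v = some d then 1 else 0) := by
  classical
  have h1 : ∀ (b' : Ballot n m), sc b' d = ∑ j, if b' j = some d then 1 else 0 := by
    intro b'; unfold sc; rw [Finset.card_filter]
  rw [h1, h1]
  have h2 : (fun j => if Function.update b i v j = some d then (1:ℕ) else 0)
      = Function.update (fun j => if b j = some d then 1 else 0) i (if v = some d then 1 else 0) := by
    funext j
    by_cases hj : j = i <;> simp [Function.update, hj]
  rw [h2, Finset.sum_update_of_mem (Finset.mem_univ i)]
  have h3 : (∑ j, if b j = some d then (1:ℕ) else 0)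
      = (if b i = some d then 1 else 0) + ∑ j ∈ Finset.univ \ {i}, if b j = some d then 1 else 0 := by
    rw [← Finset.sum_update_of_mem (Finset.mem_univ i)]
    congr 1
    funext j
    by_cases hj : j = i <;> simp [Function.update, hj]
  rw [h3]
  ring

lemma lexwin_unique {n m : ℕ} (b : Ballot n m) (d : Fin m)
    (h : ∀ e, e ≠ d → sc b e < sc b d) : IsLexWin b d := by
  have hmax : maxScore b = sc b d := le_antisymm
    (max_le' b _ (fun e => by
      by_cases he : e = d
      · subst he; exact le_rfl
      · exact (h e he).le))
    (sc_le_max b d)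
  have hw : ∀ c' ∈ winSet b, c' = d := by
    intro c' hc'
    simp only [winSet, Finset.mem_filter, Finset.mem_univ, true_and] at hc'
    by_contra hne
    exact absurd hc' (by rw [hmax]; exact (h c' hne).ne)
  refine ⟨by simp [winSet, hmax], fun c' hc' => ?_⟩
  rw [hw c' hc']

lemma pLex_eq {n m : ℕ} (b : Ballot n m) (c : Fin m) (hc : IsLexWin b c) :
    pLex b = fun d => if d = c then 1 else 0 := by
  funext d
  by_cases hd : d = c
  · subst hd; simp only [pLex]; exact if_pos hc
  · simp only [pLex, hd, if_false]
    rw [if_neg]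
    rintro ⟨h1, h2⟩
    exact hd (Fin.ext (le_antisymm (h2 c hc.1) (hc.2 d h1)))

lemma EU_lexwin {n m : ℕ} (b : Ballot n m) (c : Fin m) (hc : IsLexWin b c) (ui : Fin m → ℕ) :
    EU ui (pLex b) = (ui c : ℚ) := by
  rw [pLex_eq b c hc]
  simp [EU, ite_mul]

lemma sc_pos_voter {n m : ℕ} (b : Ballot n m) (d : Fin m) (h : 0 < sc b d) :
    ∃ i, b i = some d := by
  obtain ⟨i, hi⟩ := Finset.card_pos.mp h
  exact ⟨i, (Finset.mem_filter.mp hi).2⟩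

end Helpers

section Helpers2

lemma sc_winner {n m : ℕ} {b : Ballot n m} {c : Fin m} (hc : IsLexWin b c) :
    sc b c = maxScore b := by
  have := hc.1
  simp only [winSet, Finset.mem_filter] at this
  exact this.2

lemma sc_update_none_ne {n m : ℕ} (b : Ballot n m) (i : Fin n) {x d : Fin m}
    (hbi : b i = some x) (hxd : x ≠ d) : sc (Function.update b i none) d = sc b d := by
  have h := sc_update b i none d
  rw [hbi] at h
  simpa [hxd] using h

lemma sc_update_none_eq {n m : ℕ} (b : Ballot n m) (i : Fin n) {d : Fin m}
    (hbi : b i = some d) : sc (Function.update b i none) d + 1 = sc b d := by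
  have h := sc_update b i none d
  rw [hbi] at h
  simpa using h

lemma sc_update_some_self {n m : ℕ} (b : Ballot n m) (i : Fin n) {d : Fin m}
    (hbi : b i ≠ some d) : sc (Function.update b i (some d)) d = sc b d + 1 := by
  have h := sc_update b i (some d) d
  rw [if_neg hbi] at h
  simpa using h

lemma sc_update_some_ne {n m : ℕ} (b : Ballot n m) (i : Fin n) {v d : Fin m}
    (hbi : b i ≠ some d) (hvd : v ≠ d) : sc (Function.update b i (some v)) d = sc b d := by
  have h := sc_update b i (some v) d
  rw [if_neg hbi] at h
  simpa [hvd] using h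

lemma sc_update_some_drop {n m : ℕ} (b : Ballot n m) (i : Fin n) {v d : Fin m}
    (hbi : b i = some d) (hvd : v ≠ d) : sc (Function.update b i (some v)) d + 1 = sc b d := by
  have h := sc_update b i (some v) d
  rw [hbi] at h
  simpa [hvd] using h

lemma lazyU_eq {n m : ℕ} (u : Fin n → Fin m → ℕ) (ε : ℚ) (i : Fin n)
    (b : Ballot n m) (c : Fin m) (hc : IsLexWin b c) :
    lazyU pLex u ε i b = (u i c : ℚ) + if b i = none then ε else 0 := by
  rw [lazyU, EU_lexwin b c hc]

end Helpers2

theorem stmt18 {n m : ℕ} (hn : 0 < n) (hm : 0 < m)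
    (u : Fin n → Fin m → ℕ) (hu : ∀ i, Function.Injective (u i))
    (ε : ℚ) (hε0 : 0 < ε) (hε : ε < min ((m : ℚ)⁻¹) ((n : ℚ)⁻¹))
    (a : Fin n → Fin m) (ha : ∀ i c, u i c ≤ u i (a i))
    (b : Ballot n m) (hb : lazyPNE pLex u ε b)
    (c : Fin m) (hc : IsLexWin b c) :
    (∃ i, a i = c) ∧ ¬ ∃ c' : Fin m, ∀ i : Fin n, u i c < u i c' := by
  classical
  have hε1 : ε < 1 := by
    have h1 : (1:ℚ) ≤ (n:ℚ) := by exact_mod_cast hn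
    have h2 : (n:ℚ)⁻¹ ≤ 1 := inv_le_one_of_one_le₀ h1
    calc ε < min ((m:ℚ)⁻¹) ((n:ℚ)⁻¹) := hε
      _ ≤ (n:ℚ)⁻¹ := min_le_right _ _
      _ ≤ 1 := h2
  -- strict utility gap for a i ≠ c
  have hgap : ∀ i : Fin n, a i ≠ c → (u i c : ℚ) + 1 ≤ (u i (a i) : ℚ) := by
    intro i hne
    have h1 : u i c ≤ u i (a i) := ha i c
    have h2 : u i c ≠ u i (a i) := fun h => hne ((hu i h).symm)
    have : u i c + 1 ≤ u i (a i) := by omega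
    exact_mod_cast this
  -- Step 1: every cast ballot is for c
  have key : ∀ i x, b i = some x → x = c := by
    intro i x hix
    by_contra hxc
    set b' := Function.update b i none with hb'def
    have hsc : ∀ d, sc b' d ≤ sc b d := by
      intro d
      have h := sc_update b i none d
      simp only [hb'def] at *
      by_cases hd : b i = some d <;> simp [hd] at h <;> omega
    have hscc : sc b' c = sc b c := sc_update_none_ne b i hix hxc
    have hmax' : maxScore b' = maxScore b := by
      apply le_antisymm
      · exact max_le' _ _ fun d => (hsc d).trans (sc_le_max b d)
      · calc maxScore b = sc b c := (sc_winner hc).symm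
          _ = sc b' c := hscc.symm
          _ ≤ maxScore b' := sc_le_max _ _
    have hmemb : c ∈ winSet b' := by
      simp only [winSet, Finset.mem_filter, Finset.mem_univ, true_and]
      rw [hscc, hmax', sc_winner hc]
    have hsub : winSet b' ⊆ winSet b := by
      intro d hd
      simp only [winSet, Finset.mem_filter, Finset.mem_univ, true_and] at hd ⊢
      have h1 : sc b d ≤ maxScore b := sc_le_max b d
      have h2 : sc b' d ≤ sc b d := hsc d
      omega
    have hwin' : IsLexWin b' c := ⟨hmemb, fun c' h => hc.2 c' (hsub h)⟩
    have hpne := hb i none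
    rw [lazyU_eq u ε i b c hc, lazyU_eq u ε i b' c hwin'] at hpne
    rw [hix] at hpne
    simp only [hb'def, Function.update_self] at hpne
    simp at hpne
    linarith
  have hex : ∃ i, a i = c := by
    rcases Nat.eq_zero_or_pos (maxScore b) with hM | hM
    · -- everyone abstains
      have habs : ∀ j, b j = none := by
        intro j
        cases hbj : b j with
        | none => rfl
        | some x =>
          have h1 : 0 < sc b x := Finset.card_pos.mpr
            ⟨j, Finset.mem_filter.mpr ⟨Finset.mem_univ j, hbj⟩⟩
          have h2 := sc_le_max b x
          omega
      have hsc0 : ∀ d, sc b d = 0 := fun d => by have := sc_le_max b d; omega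
      refine ⟨⟨0, hn⟩, ?_⟩
      set i : Fin n := ⟨0, hn⟩
      by_contra haic
      set b'' := Function.update b i (some (a i)) with hb''def
      have h1 : sc b'' (a i) = 1 := by
        rw [sc_update_some_self b i (by rw [habs i]; simp), hsc0]
      have h2 : ∀ e, e ≠ a i → sc b'' e = 0 := by
        intro e he
        rw [sc_update_some_ne b i (by rw [habs i]; simp) (Ne.symm he), hsc0]
      have hwin'' : IsLexWin b'' (a i) := lexwin_unique b'' (a i) (by
        intro e he; rw [h1, h2 e he]; omega)
      have hpne := hb i (some (a i))
      rw [lazyU_eq u ε i b c hc, lazyU_eq u ε i b'' (a i) hwin''] at hpne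
      rw [habs i] at hpne
      simp only [hb''def, Function.update_self] at hpne
      simp at hpne
      have := hgap i haic
      linarith
    · -- someone votes; all votes for c
      have hscc : sc b c = maxScore b := sc_winner hc
      obtain ⟨i, hi⟩ := sc_pos_voter b c (by omega)
      have hsc0 : ∀ d, d ≠ c → sc b d = 0 := by
        intro d hd
        by_contra h0
        obtain ⟨j, hj⟩ := sc_pos_voter b d (by omega)
        exact hd (key j d hj)
      rcases Nat.lt_or_ge (sc b c) 2 with h2 | h2
      · -- sc b c = 1 : unique voter i, show a i = c
        refine ⟨i, ?_⟩
        by_contra haic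
        set b'' := Function.update b i (some (a i)) with hb''def
        have hne : b i ≠ some (a i) := by rw [hi]; intro h; exact haic (by injection h with h; exact h.symm)
        have g1 : sc b'' (a i) = 1 := by
          rw [sc_update_some_self b i hne, hsc0 (a i) haic]
        have g2 : sc b'' c = 0 := by
          have h := sc_update_some_drop b i hi haic
          rw [← hb''def] at h
          omega
        have g3 : ∀ e, e ≠ a i → e ≠ c → sc b'' e = 0 := by
          intro e he1 he2
          rw [sc_update_some_ne b i (d := e) (by rw [hi]; simpa using Ne.symm he2)
            (Ne.symm he1)]
          exact hsc0 e he2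
        have hwin'' : IsLexWin b'' (a i) := lexwin_unique b'' (a i) (by
          intro e he
          rw [g1]
          by_cases hec : e = c
          · subst hec; rw [g2]; omega
          · rw [g3 e he hec]; omega)
        have hpne := hb i (some (a i))
        rw [lazyU_eq u ε i b c hc, lazyU_eq u ε i b'' (a i) hwin''] at hpne
        rw [hi] at hpne
        simp only [hb''def, Function.update_self] at hpne
        simp at hpne
        have hg : u i c + 1 ≤ u i (a i) := by exact_mod_cast hgap i haic
        omega
      · -- sc b c ≥ 2 : abstaining keeps c winning, contradiction
        set b' := Function.update b i none with hb'def
        have g1 : sc b' c + 1 = sc b c := sc_update_none_eq b i hi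
        have g2 : ∀ e, e ≠ c → sc b' e = 0 := by
          intro e he
          rw [sc_update_none_ne b i hi (fun h : c = e => he h.symm), hsc0 e he]
        have hwin' : IsLexWin b' c := lexwin_unique b' c (by
          intro e he; rw [g2 e he]; omega)
        have hpne := hb i none
        rw [lazyU_eq u ε i b c hc, lazyU_eq u ε i b' c hwin'] at hpne
        rw [hi] at hpne
        simp only [hb'def, Function.update_self] at hpne
        simp at hpne
        linarith
  refine ⟨hex, ?_⟩
  rintro ⟨c', hP⟩
  obtain ⟨i, hai⟩ := hex
  have h1 := hP i
  have h2 := ha i c'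
  rw [hai] at h2
  omega
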